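/- For every natural number k, dual(bestCase(k)) = worstCase(k); that is, the duality involution maps the best-case (minimal representation complexity for its value, tower-of-exponents-sized) number of representation size k to the worst-case number of representation size k. -/

import Mathlib

/-- The pairing function `c`. -/
def c (i j : ℕ) : ℕ := if Odd j then 2 ^ (i + 1) * j else 2 ^ (i + 1) * (j + 1) - 1

/-- The inverse of `c` on positive naturals (returns `(0,0)` at `0`). -/
def c' (n : ℕ) : ℕ × ℕ :=
  (padicValNat 2 (n + n % 2) - 1, (n + n % 2) / 2 ^ padicValNat 2 (n + n % 2) - n % 2)

lemma c'_fst_lt {n : ℕ} (hn : 0 < n) : (c' n).1 < n := by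
  have hm : 0 < n + n % 2 := by omega
  have hdvd : (2 : ℕ) ^ padicValNat 2 (n + n % 2) ∣ (n + n % 2) := pow_padicValNat_dvd
  have hle : (2 : ℕ) ^ padicValNat 2 (n + n % 2) ≤ n + n % 2 := Nat.le_of_dvd hm hdvd
  have hlt : padicValNat 2 (n + n % 2) < 2 ^ padicValNat 2 (n + n % 2) := by first | exact Nat.lt_two_pow_self | exact Nat.lt_two_pow_self _
  simp only [c']
  generalize hv : padicValNat 2 (n + n % 2) = v at *
  generalize hp : (2 : ℕ) ^ v = p at *
  omega

lemma c'_snd_lt {n : ℕ} (hn : 0 < n) : (c' n).2 < n := by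
  have hm : 0 < n + n % 2 := by omega
  have h2 : (2 : ℕ) ∣ (n + n % 2) := by omega
  have hv : 1 ≤ padicValNat 2 (n + n % 2) := one_le_padicValNat_of_dvd hm.ne' h2
  have h2le : (2 : ℕ) ≤ 2 ^ padicValNat 2 (n + n % 2) := by
    calc (2:ℕ) = 2 ^ 1 := (pow_one 2).symm
    _ ≤ 2 ^ padicValNat 2 (n + n % 2) := Nat.pow_le_pow_right (by norm_num) hv
  have hle : (n + n % 2) / 2 ^ padicValNat 2 (n + n % 2) ≤ (n + n % 2) / 2 :=
    Nat.div_le_div_left h2le (by norm_num)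
  simp only [c']
  generalize hq : (n + n % 2) / 2 ^ padicValNat 2 (n + n % 2) = q at *
  omega

lemma c'_fst_lt_of_lt {m n : ℕ} (h : m < n) : (c' m).1 < n := by
  rcases Nat.eq_zero_or_pos m with rfl | hm
  · simp [c']; omega
  · exact lt_trans (c'_fst_lt hm) h

lemma c'_snd_lt_of_lt {m n : ℕ} (h : m < n) : (c' m).2 < n := by
  rcases Nat.eq_zero_or_pos m with rfl | hm
  · simp [c']; omega
  · exact lt_trans (c'_snd_lt hm) h

def dual : ℕ → ℕ
  | 0 => 0
  | n + 1 => c (dual (c' (n + 1)).2) (dual (c' (n + 1)).1)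
  decreasing_by
  · exact c'_snd_lt (Nat.succ_pos n)
  · exact c'_fst_lt (Nat.succ_pos n)

/-- best case: iterated `x ↦ c x 0` (towers of exponents). -/
def bestCase (k : ℕ) : ℕ := (fun x => c x 0)^[k] 0

/-- worst case: iterated `x ↦ c 0 x`. -/
def worstCase (k : ℕ) : ℕ := (fun x => c 0 x)^[k] 0

/-! Since `c'` inverts `c`, the recursion defining `dual` unfolds to
`dual (c i j) = c (dual j) (dual i)`. Together with `dual 0 = 0` this turns each step
`x ↦ c x 0` of the best-case tower into a step `y ↦ c 0 y` of the worst-case one. -/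

lemma padicValNat_pow_mul_of_not_dvd {p m : ℕ} [hp : Fact p.Prime] (k : ℕ) (hm : ¬ p ∣ m) :
    padicValNat p (p ^ k * m) = k := by
  rw [padicValNat.mul (pow_ne_zero k hp.out.ne_zero) (by rintro rfl; exact hm (dvd_zero p)),
    padicValNat.prime_pow, padicValNat.eq_zero_of_not_dvd hm, add_zero]

lemma c'_of_add_mod_two_eq {n i q : ℕ} (hq : Odd q) (h : n + n % 2 = 2 ^ (i + 1) * q) :
    c' n = (i, q - n % 2) := by
  have hv : padicValNat 2 (2 ^ (i + 1) * q) = i + 1 :=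
    padicValNat_pow_mul_of_not_dvd _ (Nat.two_dvd_ne_zero.mpr (Nat.odd_iff.mp hq))
  simp only [c', h, hv, Nat.add_sub_cancel,
    Nat.mul_div_cancel_left _ (by positivity : 0 < 2 ^ (i + 1))]

lemma c'_c (i j : ℕ) : c' (c i j) = (i, j) := by
  have h2 : 2 ∣ 2 ^ (i + 1) := dvd_pow_self 2 i.succ_ne_zero
  unfold c
  split_ifs with hj
  · have hmod : 2 ^ (i + 1) * j % 2 = 0 := Nat.mod_eq_zero_of_dvd (h2.mul_right j)
    rw [c'_of_add_mod_two_eq hj (by rw [hmod, add_zero]), hmod, Nat.sub_zero]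
  · have hmod : 2 ^ (i + 1) * (j + 1) % 2 = 0 := Nat.mod_eq_zero_of_dvd (h2.mul_right _)
    have hpos : 0 < 2 ^ (i + 1) * (j + 1) := by positivity
    have hodd : (2 ^ (i + 1) * (j + 1) - 1) % 2 = 1 := by omega
    rw [c'_of_add_mod_two_eq (i := i) (Nat.odd_add_one.mpr hj) (by omega), hodd, Nat.add_sub_cancel]

lemma c_pos (i j : ℕ) : 0 < c i j := by
  unfold c
  split_ifs with hj
  · exact Nat.mul_pos (by positivity) hj.pos
  · have : 2 ≤ 2 ^ (i + 1) * (j + 1) :=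
      le_mul_of_le_of_one_le (Nat.le_self_pow i.succ_ne_zero 2) j.succ_pos
    omega

lemma dual_zero : dual 0 = 0 := by
  rw [dual]

lemma dual_c (i j : ℕ) : dual (c i j) = c (dual j) (dual i) := by
  obtain ⟨n, hn⟩ := Nat.exists_eq_add_one_of_ne_zero (c_pos i j).ne'
  rw [hn, dual, ← hn, c'_c]

lemma bestCase_succ (k : ℕ) : bestCase (k + 1) = c (bestCase k) 0 :=
  Function.iterate_succ_apply' _ k 0

lemma worstCase_succ (k : ℕ) : worstCase (k + 1) = c 0 (worstCase k) :=
  Function.iterate_succ_apply' _ k 0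

theorem dual_bestCase_eq_worstCase (k : ℕ) : dual (bestCase k) = worstCase k := by
  induction k with
  | zero => exact dual_zero
  | succ k ih => rw [bestCase_succ, dual_c, dual_zero, ih, worstCase_succ]
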